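/- arXiv:1212.4717 — 2 statements merged into one kernel-verified Lean document; each statement's English description precedes it below -/
import Mathlib

section
/- There exists a constant C > 0 (depending only on λ and α) such that for every t ∈ (0, 1] and every φ ≥ 0, | ∫_ℝ j(t, φ, z)² γ(z) dz − φ²(1 + (2λ + α²)t) − 2λφt | ≤ C (φ² + φ + 1) t². -/
/-!
Write `jfun = S φ + I` with `S z = exp (α z √t + (λ - α²/2) t)` and `I z = ∫₀ᵗ K z u du`,
where `K` is the integrand in `jfun`. Under the standard Gaussian, `S²` and `S · K(·, u)` are
exponentials of affine functions of `z`, so the moment generating function gives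
`E[S²] = exp ((2λ + α²) t)` and `E[S · K(·, u)] = λ exp (λ t + (λ + α²) u)`, and Fubini gives
`E[S I]`. After subtracting the linear terms, the error is
`φ² (e^{at} - 1 - at) + 2λφ (∫₀ᵗ e^{λt + (λ+α²)u} du - t) + E[I²]` with `a = 2λ + α²`:
three nonnegative quantities, each `O(t²)`. For the last one, `0 ≤ I z ≤ λ t e^{λ + α|z|}`,
and `e^{2α|z|}` is Gaussian-integrable.
-/

open MeasureTheory Real

/-- Standard Gaussian density on ℝ. -/
noncomputable def gaussDensity (z : ℝ) : ℝ := Real.exp (-z ^ 2 / 2) / Real.sqrt (2 * Real.pi)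

/-- One-step update of the conditional odds process upon observing a normalized
increment `z` after a waiting time `t`, starting from odds `φ`. -/
noncomputable def jfun (lam alp t φ z : ℝ) : ℝ :=
  Real.exp (alp * z * Real.sqrt t + (lam - alp ^ 2 / 2) * t) * φ +
    ∫ u in (0:ℝ)..t, lam * Real.exp ((lam + alp * z / Real.sqrt t) * u - alp ^ 2 * u ^ 2 / (2 * t))

open ProbabilityTheory Set Function

lemma exp_sub_one_le_mul_exp (x : ℝ) : exp x - 1 ≤ x * exp x := by
  have h : exp (-x) * exp x = 1 := by rw [← exp_add, neg_add_cancel, exp_zero]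
  nlinarith [mul_le_mul_of_nonneg_right (one_sub_le_exp_neg x) (exp_pos x).le]

lemma exp_mul_sub_one_sub_le {a t : ℝ} (ha : 0 ≤ a) (ht0 : 0 ≤ t) (ht1 : t ≤ 1) :
    exp (a * t) - 1 - a * t ≤ a ^ 2 * exp a * t ^ 2 := by
  have hat : 0 ≤ a * t := mul_nonneg ha ht0
  have h := exp_sub_one_le_mul_exp (a * t)
  calc exp (a * t) - 1 - a * t ≤ a * t * (a * t * exp (a * t)) := by
        nlinarith [mul_le_mul_of_nonneg_left h hat]
    _ ≤ a * t * (a * t * exp a) := by gcongr; nlinarith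
    _ = a ^ 2 * exp a * t ^ 2 := by ring

lemma le_intervalIntegral_exp_add_mul {b c t : ℝ} (hb : 0 ≤ b) (hc : 0 ≤ c) (ht : 0 ≤ t) :
    t ≤ ∫ u in (0:ℝ)..t, exp (b * t + c * u) := by
  have hcont : Continuous fun u => exp (b * t + c * u) := by fun_prop
  simpa using intervalIntegral.integral_mono_on (μ := volume) ht intervalIntegrable_const
    (hcont.intervalIntegrable _ _) fun u hu =>
      one_le_exp (by nlinarith [hu.1] : 0 ≤ b * t + c * u)

lemma intervalIntegral_exp_add_mul_sub_le {b c t : ℝ} (hb : 0 ≤ b) (hc : 0 ≤ c) (ht0 : 0 ≤ t)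
    (ht1 : t ≤ 1) :
    (∫ u in (0:ℝ)..t, exp (b * t + c * u)) - t ≤ (b + c) * exp (b + c) * t ^ 2 := by
  have hcont : Continuous fun u => exp (b * t + c * u) := by fun_prop
  have hint : (∫ u in (0:ℝ)..t, exp (b * t + c * u)) ≤ t * exp ((b + c) * t) := by
    simpa using intervalIntegral.integral_mono_on (μ := volume) ht0 (hcont.intervalIntegrable _ _)
      intervalIntegrable_const fun u hu =>
        exp_le_exp.mpr (by nlinarith [hu.2] : b * t + c * u ≤ (b + c) * t)
  have hx := exp_sub_one_le_mul_exp ((b + c) * t)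
  have hle : exp ((b + c) * t) ≤ exp (b + c) := exp_le_exp.mpr (by nlinarith)
  calc (∫ u in (0:ℝ)..t, exp (b * t + c * u)) - t ≤ t * (exp ((b + c) * t) - 1) := by
        linarith
    _ ≤ t * ((b + c) * t * exp (b + c)) := by
        gcongr
        exact hx.trans (mul_le_mul_of_nonneg_left hle (by positivity))
    _ = (b + c) * exp (b + c) * t ^ 2 := by ring

lemma integral_intervalIntegral_swap_of_norm_le {α E : Type*} [MeasurableSpace α]
    [NormedAddCommGroup E] [NormedSpace ℝ E] {μ : Measure α} [SFinite μ] {f : α → ℝ → E}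
    {g : α → ℝ} {a b : ℝ} (hab : a ≤ b)
    (hf : AEStronglyMeasurable (uncurry f) (μ.prod (volume.restrict (Ioc a b))))
    (hg : Integrable g μ) (hfg : ∀ x, ∀ u ∈ Ioc a b, ‖f x u‖ ≤ g x) :
    ∫ x, (∫ u in a..b, f x u) ∂μ = ∫ u in a..b, ∫ x, f x u ∂μ := by
  simp_rw [intervalIntegral.integral_of_le hab]
  refine integral_integral_swap ((hg.mul_prod (integrable_const (1 : ℝ))).mono' hf ?_)
  filter_upwards [Measure.quasiMeasurePreserving_snd.ae (ae_restrict_mem measurableSet_Ioc)]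
    with p hp
  simpa [uncurry] using hfg p.1 p.2 hp

lemma gaussDensity_eq_gaussianPDFReal : gaussDensity = gaussianPDFReal 0 1 := by
  ext z
  simp [gaussDensity, gaussianPDFReal, div_eq_inv_mul]

lemma integral_mul_gaussDensity (f : ℝ → ℝ) :
    ∫ z, f z * gaussDensity z = ∫ z, f z ∂gaussianReal 0 1 := by
  simp_rw [integral_gaussianReal_eq_integral_smul one_ne_zero, gaussDensity_eq_gaussianPDFReal,
    smul_eq_mul, mul_comm]

lemma integral_exp_mul_add_gaussianReal (μ : ℝ) (v : NNReal) (c d : ℝ) :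
    ∫ x, exp (c * x + d) ∂gaussianReal μ v = exp (μ * c + v * c ^ 2 / 2 + d) := by
  have h := congrFun (mgf_id_gaussianReal (μ := μ) (v := v)) c
  simp only [mgf, id] at h
  simp_rw [exp_add, integral_mul_const, h, exp_add]

lemma integrable_exp_mul_abs_gaussianReal (μ : ℝ) (v : NNReal) (b : ℝ) :
    Integrable (fun x => exp (b * |x|)) (gaussianReal μ v) := by
  refine ((integrable_exp_mul_gaussianReal b).add
    (integrable_exp_mul_gaussianReal (-b))).mono' (by fun_prop) (ae_of_all _ fun x => ?_)
  calc ‖exp (b * |x|)‖ = exp (b * |x|) := norm_of_nonneg (exp_pos _).le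
    _ ≤ exp |b * x| := exp_le_exp.mpr (by rw [abs_mul]; gcongr; exact le_abs_self b)
    _ ≤ exp (b * x) + exp (-b * x) := by rw [neg_mul]; exact exp_abs_le _

lemma integrable_exp_add_mul_abs_sq_gaussianReal (μ : ℝ) (v : NNReal) (a b : ℝ) :
    Integrable (fun x => exp (a + b * |x|) ^ 2) (gaussianReal μ v) := by
  refine ((integrable_exp_mul_abs_gaussianReal μ v (2 * b)).const_mul (exp (2 * a))).congr
    (ae_of_all _ fun x => ?_)
  simp only [← exp_add, sq]
  ring_nf

lemma integrable_gaussianReal_of_abs_le_mul_exp_add_mul_abs_sq {μ : ℝ} {v : NNReal}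
    {f : ℝ → ℝ} (hf : Continuous f) {c a b : ℝ} (hfab : ∀ x, |f x| ≤ c * exp (a + b * |x|) ^ 2) :
    Integrable f (gaussianReal μ v) :=
  ((integrable_exp_add_mul_abs_sq_gaussianReal μ v a b).const_mul c).mono'
    hf.aestronglyMeasurable (ae_of_all _ fun x => (norm_eq_abs (f x)).trans_le (hfab x))

noncomputable def jfunSlope (lam alp t z : ℝ) : ℝ := exp (alp * z * √t + (lam - alp ^ 2 / 2) * t)

noncomputable def jfunKernel (lam alp t z u : ℝ) : ℝ :=
  lam * exp ((lam + alp * z / √t) * u - alp ^ 2 * u ^ 2 / (2 * t))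

noncomputable def jfunIntercept (lam alp t z : ℝ) : ℝ := ∫ u in (0:ℝ)..t, jfunKernel lam alp t z u

lemma jfun_eq_slope_mul_add_intercept (lam alp t φ z : ℝ) :
    jfun lam alp t φ z = jfunSlope lam alp t z * φ + jfunIntercept lam alp t z := rfl

section JFun

variable {lam alp t : ℝ}

lemma continuous_jfunSlope : Continuous (jfunSlope lam alp t) := by
  unfold jfunSlope
  fun_prop

lemma continuous_uncurry_jfunKernel : Continuous (uncurry (jfunKernel lam alp t)) := by
  unfold jfunKernel
  fun_prop

lemma continuous_jfunIntercept : Continuous (jfunIntercept lam alp t) :=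
  intervalIntegral.continuous_parametric_intervalIntegral_of_continuous'
    continuous_uncurry_jfunKernel 0 t

lemma jfunSlope_pos {z : ℝ} : 0 < jfunSlope lam alp t z := exp_pos _

lemma jfunKernel_nonneg (hlam : 0 ≤ lam) (z u : ℝ) : 0 ≤ jfunKernel lam alp t z u := by
  unfold jfunKernel
  positivity

lemma jfunIntercept_nonneg (hlam : 0 ≤ lam) (ht : 0 ≤ t) (z : ℝ) :
    0 ≤ jfunIntercept lam alp t z :=
  intervalIntegral.integral_nonneg ht fun u _ => jfunKernel_nonneg hlam z u

lemma jfunSlope_le (hlam : 0 ≤ lam) (halp : 0 ≤ alp) (ht0 : 0 ≤ t) (ht1 : t ≤ 1) (z : ℝ) :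
    jfunSlope lam alp t z ≤ exp (lam + alp * |z|) := by
  have hz : alp * z * √t ≤ alp * |z| := by
    calc alp * z * √t ≤ alp * (|z| * √t) := by
          rw [mul_assoc]; gcongr; exact le_abs_self z
      _ ≤ alp * |z| := by gcongr; exact mul_le_of_le_one_right (abs_nonneg z) (sqrt_le_one.mpr ht1)
  exact exp_le_exp.mpr (by nlinarith [sq_nonneg alp])

lemma jfunKernel_le (hlam : 0 ≤ lam) (halp : 0 ≤ alp) (ht0 : 0 < t) (ht1 : t ≤ 1) (z : ℝ)
    {u : ℝ} (hu : u ∈ Icc 0 t) :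
    jfunKernel lam alp t z u ≤ lam * exp (lam + alp * |z|) := by
  have hq0 : 0 ≤ u / √t := div_nonneg hu.1 (sqrt_nonneg t)
  have hq1 : u / √t ≤ 1 := by
    rw [div_le_one (sqrt_pos.mpr ht0)]
    exact hu.2.trans (le_sqrt_of_sq_le (by nlinarith))
  have hz : alp * z * (u / √t) ≤ alp * |z| := by
    calc alp * z * (u / √t) ≤ alp * (|z| * (u / √t)) := by
          rw [mul_assoc]; gcongr; exact le_abs_self z
      _ ≤ alp * |z| := by gcongr; exact mul_le_of_le_one_right (abs_nonneg z) hq1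
  have hlu : lam * u ≤ lam := mul_le_of_le_one_right hlam (hu.2.trans ht1)
  have hquad : 0 ≤ alp ^ 2 * u ^ 2 / (2 * t) := by positivity
  refine mul_le_mul_of_nonneg_left (exp_le_exp.mpr ?_) hlam
  calc (lam + alp * z / √t) * u - alp ^ 2 * u ^ 2 / (2 * t)
      = lam * u + alp * z * (u / √t) - alp ^ 2 * u ^ 2 / (2 * t) := by ring
    _ ≤ lam + alp * |z| := by linarith

lemma jfunIntercept_le (hlam : 0 ≤ lam) (halp : 0 ≤ alp) (ht0 : 0 < t) (ht1 : t ≤ 1) (z : ℝ) :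
    jfunIntercept lam alp t z ≤ lam * t * exp (lam + alp * |z|) := by
  have h := intervalIntegral.integral_mono_on (μ := volume) ht0.le
    ((continuous_uncurry_jfunKernel.uncurry_left z).intervalIntegrable _ _)
    intervalIntegrable_const fun u hu => jfunKernel_le hlam halp ht0 ht1 z hu
  simpa [jfunIntercept, mul_left_comm, mul_assoc] using h

lemma jfunSlope_mul_jfunIntercept_le (hlam : 0 ≤ lam) (halp : 0 ≤ alp) (ht0 : 0 < t)
    (ht1 : t ≤ 1) (z : ℝ) :
    jfunSlope lam alp t z * jfunIntercept lam alp t z ≤ lam * t * exp (lam + alp * |z|) ^ 2 := by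
  calc jfunSlope lam alp t z * jfunIntercept lam alp t z
      ≤ exp (lam + alp * |z|) * (lam * t * exp (lam + alp * |z|)) :=
        mul_le_mul (jfunSlope_le hlam halp ht0.le ht1 z) (jfunIntercept_le hlam halp ht0 ht1 z)
          (jfunIntercept_nonneg hlam ht0.le z) (exp_pos _).le
    _ = lam * t * exp (lam + alp * |z|) ^ 2 := by ring

lemma jfunIntercept_sq_le (hlam : 0 ≤ lam) (halp : 0 ≤ alp) (ht0 : 0 < t) (ht1 : t ≤ 1)
    (z : ℝ) :
    jfunIntercept lam alp t z ^ 2 ≤ (lam * t) ^ 2 * exp (lam + alp * |z|) ^ 2 := by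
  rw [← mul_pow]
  exact pow_le_pow_left₀ (jfunIntercept_nonneg hlam ht0.le z)
    (jfunIntercept_le hlam halp ht0 ht1 z) 2

lemma integrable_jfunSlope_sq (hlam : 0 ≤ lam) (halp : 0 ≤ alp) (ht0 : 0 ≤ t) (ht1 : t ≤ 1) :
    Integrable (fun z => jfunSlope lam alp t z ^ 2) (gaussianReal 0 1) :=
  integrable_gaussianReal_of_abs_le_mul_exp_add_mul_abs_sq (continuous_jfunSlope.pow 2)
    (c := 1) fun z => by
      rw [abs_of_nonneg (sq_nonneg _), one_mul]
      exact pow_le_pow_left₀ jfunSlope_pos.le (jfunSlope_le hlam halp ht0 ht1 z) 2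

lemma integrable_jfunSlope_mul_jfunIntercept (hlam : 0 ≤ lam) (halp : 0 ≤ alp) (ht0 : 0 < t)
    (ht1 : t ≤ 1) :
    Integrable (fun z => jfunSlope lam alp t z * jfunIntercept lam alp t z) (gaussianReal 0 1) :=
  integrable_gaussianReal_of_abs_le_mul_exp_add_mul_abs_sq
    (continuous_jfunSlope.mul continuous_jfunIntercept) fun z => by
      rw [abs_of_nonneg (mul_nonneg jfunSlope_pos.le (jfunIntercept_nonneg hlam ht0.le z))]
      exact jfunSlope_mul_jfunIntercept_le hlam halp ht0 ht1 z

lemma integrable_jfunIntercept_sq (hlam : 0 ≤ lam) (halp : 0 ≤ alp) (ht0 : 0 < t)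
    (ht1 : t ≤ 1) :
    Integrable (fun z => jfunIntercept lam alp t z ^ 2) (gaussianReal 0 1) :=
  integrable_gaussianReal_of_abs_le_mul_exp_add_mul_abs_sq (continuous_jfunIntercept.pow 2)
    fun z => by
      rw [abs_of_nonneg (sq_nonneg _)]
      exact jfunIntercept_sq_le hlam halp ht0 ht1 z

lemma integral_jfunSlope_sq (ht : 0 ≤ t) :
    ∫ z, jfunSlope lam alp t z ^ 2 ∂gaussianReal 0 1 = exp ((2 * lam + alp ^ 2) * t) := by
  have hsq : ∀ z, jfunSlope lam alp t z ^ 2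
      = exp (2 * alp * √t * z + (2 * lam - alp ^ 2) * t) := fun z => by
    rw [jfunSlope, sq, ← exp_add]
    ring_nf
  simp_rw [hsq, integral_exp_mul_add_gaussianReal, NNReal.coe_one, mul_pow, sq_sqrt ht]
  ring_nf

lemma integral_jfunSlope_mul_jfunKernel (ht : 0 < t) (u : ℝ) :
    ∫ z, jfunSlope lam alp t z * jfunKernel lam alp t z u ∂gaussianReal 0 1
      = lam * exp (lam * t + (lam + alp ^ 2) * u) := by
  have hprod : ∀ z, jfunSlope lam alp t z * jfunKernel lam alp t z u
      = lam * exp ((alp * √t + alp * u / √t) * z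
          + ((lam - alp ^ 2 / 2) * t + lam * u - alp ^ 2 * u ^ 2 / (2 * t))) := fun z => by
    rw [jfunSlope, jfunKernel, mul_left_comm, ← exp_add]
    ring_nf
  have hs : √t ^ 2 = t := sq_sqrt ht.le
  simp_rw [hprod, integral_const_mul, integral_exp_mul_add_gaussianReal, NNReal.coe_one]
  congr 2
  field_simp
  rw [hs]
  ring

lemma integral_jfunSlope_mul_jfunIntercept (hlam : 0 ≤ lam) (halp : 0 ≤ alp) (ht0 : 0 < t)
    (ht1 : t ≤ 1) :
    ∫ z, jfunSlope lam alp t z * jfunIntercept lam alp t z ∂gaussianReal 0 1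
      = lam * ∫ u in (0:ℝ)..t, exp (lam * t + (lam + alp ^ 2) * u) := by
  have hcont : Continuous (uncurry fun z u => jfunSlope lam alp t z * jfunKernel lam alp t z u) :=
    (continuous_jfunSlope.comp continuous_fst).mul continuous_uncurry_jfunKernel
  have hswap := integral_intervalIntegral_swap_of_norm_le ht0.le hcont.aestronglyMeasurable
    ((integrable_exp_add_mul_abs_sq_gaussianReal 0 1 lam alp).const_mul lam) fun z u hu => by
      rw [norm_of_nonneg (mul_nonneg jfunSlope_pos.le (jfunKernel_nonneg hlam z u))]
      exact (mul_le_mul (jfunSlope_le hlam halp ht0.le ht1 z)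
        (jfunKernel_le hlam halp ht0 ht1 z (Ioc_subset_Icc_self hu))
        (jfunKernel_nonneg hlam z u) (exp_pos _).le).trans_eq (by ring)
  simp_rw [jfunIntercept, ← intervalIntegral.integral_const_mul, hswap,
    integral_jfunSlope_mul_jfunKernel ht0]

lemma integral_jfunIntercept_sq_le (hlam : 0 ≤ lam) (halp : 0 ≤ alp) (ht0 : 0 < t)
    (ht1 : t ≤ 1) :
    ∫ z, jfunIntercept lam alp t z ^ 2 ∂gaussianReal 0 1
      ≤ lam ^ 2 * (∫ z, exp (lam + alp * |z|) ^ 2 ∂gaussianReal 0 1) * t ^ 2 := by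
  have hM := integrable_exp_add_mul_abs_sq_gaussianReal 0 1 lam alp
  calc ∫ z, jfunIntercept lam alp t z ^ 2 ∂gaussianReal 0 1
      ≤ ∫ z, (lam * t) ^ 2 * exp (lam + alp * |z|) ^ 2 ∂gaussianReal 0 1 :=
        integral_mono (integrable_jfunIntercept_sq hlam halp ht0 ht1) (hM.const_mul _)
          (jfunIntercept_sq_le hlam halp ht0 ht1)
    _ = lam ^ 2 * (∫ z, exp (lam + alp * |z|) ^ 2 ∂gaussianReal 0 1) * t ^ 2 := by
        rw [integral_const_mul]
        ring

lemma integral_jfun_sq_mul_gaussDensity (hlam : 0 ≤ lam) (halp : 0 ≤ alp) (ht0 : 0 < t)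
    (ht1 : t ≤ 1) (φ : ℝ) :
    ∫ z, jfun lam alp t φ z ^ 2 * gaussDensity z
      = φ ^ 2 * exp ((2 * lam + alp ^ 2) * t)
        + 2 * φ * (lam * ∫ u in (0:ℝ)..t, exp (lam * t + (lam + alp ^ 2) * u))
        + ∫ z, jfunIntercept lam alp t z ^ 2 ∂gaussianReal 0 1 := by
  have hS := (integrable_jfunSlope_sq hlam halp ht0.le ht1).const_mul (φ ^ 2)
  have hSI := (integrable_jfunSlope_mul_jfunIntercept hlam halp ht0 ht1).const_mul (2 * φ)
  have hexpand : ∀ z, jfun lam alp t φ z ^ 2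
      = φ ^ 2 * jfunSlope lam alp t z ^ 2
        + 2 * φ * (jfunSlope lam alp t z * jfunIntercept lam alp t z)
        + jfunIntercept lam alp t z ^ 2 := fun z => by
    rw [jfun_eq_slope_mul_add_intercept]
    ring
  simp_rw [integral_mul_gaussDensity, hexpand]
  rw [integral_add _ (integrable_jfunIntercept_sq hlam halp ht0 ht1), integral_add hS hSI,
    integral_const_mul, integral_const_mul, integral_jfunSlope_sq ht0.le,
    integral_jfunSlope_mul_jfunIntercept hlam halp ht0 ht1]
  exact hS.add hSI

end JFun

lemma sq_mul_add_mul_add_le {φ x y z p q r T : ℝ} (hφ : 0 ≤ φ) (hT : 0 ≤ T) (hp : 0 ≤ p)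
    (hq : 0 ≤ q) (hr : 0 ≤ r) (hx : x ≤ p * T) (hy : y ≤ q * T) (hz : z ≤ r * T) :
    φ ^ 2 * x + φ * y + z ≤ (p + q + r) * (φ ^ 2 + φ + 1) * T := by
  nlinarith [mul_le_mul_of_nonneg_left hx (sq_nonneg φ), mul_le_mul_of_nonneg_left hy hφ,
    mul_nonneg (add_nonneg hp hq) hT, mul_nonneg (mul_nonneg (add_nonneg hp hr) hT) hφ,
    mul_nonneg (mul_nonneg (add_nonneg hq hr) hT) (sq_nonneg φ)]

/-- Small-time asymptotic expansion of the Gaussian second moment of the one-step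
odds update: the error relative to `φ²(1 + (2λ + α²)t) + 2λφt` is `O((φ² + φ + 1) t²)`,
with a constant depending only on `λ` and `α`. -/
theorem gaussian_second_moment_jfun_asymptotics (lam alp : ℝ) (hlam : 0 < lam) (halp : 0 < alp) :
    ∃ C : ℝ, 0 < C ∧ ∀ t : ℝ, t ∈ Set.Ioc (0:ℝ) 1 → ∀ φ : ℝ, 0 ≤ φ →
      |(∫ z : ℝ, (jfun lam alp t φ z) ^ 2 * gaussDensity z) -
          φ ^ 2 * (1 + (2 * lam + alp ^ 2) * t) - 2 * lam * φ * t| ≤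
        C * (φ ^ 2 + φ + 1) * t ^ 2 := by
  set a := 2 * lam + alp ^ 2 with ha
  set M := ∫ z, exp (lam + alp * |z|) ^ 2 ∂gaussianReal 0 1
  have hM : 0 ≤ M := integral_nonneg fun z => sq_nonneg _
  refine ⟨a ^ 2 * exp a + 2 * lam * (a * exp a) + lam ^ 2 * M, by positivity, ?_⟩
  rintro t ⟨ht0, ht1⟩ φ hφ
  rw [integral_jfun_sq_mul_gaussDensity hlam.le halp.le ht0 ht1, ← ha]
  set I := ∫ u in (0:ℝ)..t, exp (lam * t + (lam + alp ^ 2) * u)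
  set R := ∫ z, jfunIntercept lam alp t z ^ 2 ∂gaussianReal 0 1
  have hκ : 0 ≤ lam + alp ^ 2 := by positivity
  have hslope := exp_mul_sub_one_sub_le (by positivity : 0 ≤ a) ht0.le ht1
  have hslope₀ : 0 ≤ exp (a * t) - 1 - a * t := by linarith [add_one_le_exp (a * t)]
  have hcross : 2 * lam * (I - t) ≤ 2 * lam * (a * exp a) * t ^ 2 := by
    have h := intervalIntegral_exp_add_mul_sub_le hlam.le hκ ht0.le ht1
    rw [show lam + (lam + alp ^ 2) = a by ring] at h
    nlinarith
  have hcross₀ : 0 ≤ I - t := sub_nonneg.mpr (le_intervalIntegral_exp_add_mul hlam.le hκ ht0.le)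
  have hR₀ : 0 ≤ R := integral_nonneg fun z => sq_nonneg _
  rw [show φ ^ 2 * exp (a * t) + 2 * φ * (lam * I) + R - φ ^ 2 * (1 + a * t) - 2 * lam * φ * t
      = φ ^ 2 * (exp (a * t) - 1 - a * t) + φ * (2 * lam * (I - t)) + R by ring,
    abs_of_nonneg (by positivity)]
  exact sq_mul_add_mul_add_le hφ (sq_nonneg t) (by positivity) (by positivity) (by positivity)
    hslope hcross (integral_jfunIntercept_sq_le hlam.le halp.le ht0 ht1)
end

section
/- For every k ≥ 1, Φₖ is square-integrable and, almost surely, E[Φₖ² | Fₖ₋₁] ≤ Φₖ₋₁² e^{(2λ + α²)t} + 2Φₖ₋₁ e^{λt}(λ/(λ + α²))(e^{(λ + α²)t} − 1) + e^{α² t}(e^{λt} − 1)². -/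
open MeasureTheory Real

/-- The discretely observed odds chain: `Φ₀ = φ` and `Φₖ = j(t, Φₖ₋₁, Zₖ)`. -/
noncomputable def oddsChain {Ω : Type*} (lam alp t φ : ℝ) (Z : ℕ → Ω → ℝ) : ℕ → Ω → ℝ
  | 0 => fun _ => φ
  | k + 1 => fun ω => jfun lam alp t (oddsChain lam alp t φ Z k ω) (Z (k + 1) ω)

/-- The filtration `Fₖ = σ(Z₁, …, Zₖ)` generated by the first `k` observations
(`F₀` is trivial). -/
def obsFiltration {Ω : Type*} (Z : ℕ → Ω → ℝ) (k : ℕ) : MeasurableSpace Ω :=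
  ⨆ i ∈ Set.Icc 1 k, MeasurableSpace.comap (Z i) inferInstance

/-!
Since `Φₖ = A(Zₖ) Φₖ₋₁ + B(Zₖ)` (with `A = jSlope`, `B = jIntercept`) is affine in `Φₖ₋₁`
with coefficients depending only on `Zₖ`, which is independent of `Fₖ₋₁`, we get
`E[Φₖ² | Fₖ₋₁] = Φₖ₋₁² E[A²] + 2 Φₖ₋₁ E[AB] + E[B²]`. Here `A(z)` is the exponential of an
affine function of `z` and `B(z)` an integral over `u ∈ (0, t]` of such exponentials, so by
Fubini every moment reduces to the Gaussian moment generating function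
`E[exp (c Z)] = exp (c² / 2)`. This gives `E[A²]` and `E[AB]` exactly, and
`E[B²] = λ² ∫∫ exp (λ (u + v) + α² u v / t) du dv`, which `u v ≤ t²` bounds by the last term.
-/

open ProbabilityTheory Set

section GaussianExp

lemma integrable_exp_affine_gaussianReal (a b : ℝ) :
    Integrable (fun x => rexp (a + b * x)) (gaussianReal 0 1) := by
  simp_rw [exp_add a]
  exact (integrable_exp_mul_gaussianReal b).const_mul _

lemma integral_exp_affine_gaussianReal (a b : ℝ) :
    ∫ x, rexp (a + b * x) ∂gaussianReal 0 1 = rexp (a + b ^ 2 / 2) := by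
  have hmgf := congrFun (mgf_fun_id_gaussianReal (μ := 0) (v := 1)) b
  rw [mgf] at hmgf
  simp_rw [exp_add a]
  simp only [integral_const_mul, hmgf, zero_mul, zero_add, NNReal.coe_one, one_mul]

variable {β : Type*} [MeasurableSpace β] {ρ : Measure β} [SFinite ρ] {a b : β → ℝ}

lemma integrable_prod_exp_affine_gaussianReal (ha : Measurable a) (hb : Measurable b)
    (h : Integrable (fun y => rexp (a y + b y ^ 2 / 2)) ρ) :
    Integrable (fun p : ℝ × β => rexp (a p.2 + b p.2 * p.1)) ((gaussianReal 0 1).prod ρ) := by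
  rw [integrable_prod_iff' (by fun_prop)]
  refine ⟨ae_of_all _ fun y => integrable_exp_affine_gaussianReal (a y) (b y), ?_⟩
  simpa only [norm_of_nonneg (exp_pos _).le, integral_exp_affine_gaussianReal] using h

lemma integral_integral_exp_affine_gaussianReal (ha : Measurable a) (hb : Measurable b)
    (h : Integrable (fun y => rexp (a y + b y ^ 2 / 2)) ρ) :
    ∫ x, ∫ y, rexp (a y + b y * x) ∂ρ ∂gaussianReal 0 1 = ∫ y, rexp (a y + b y ^ 2 / 2) ∂ρ := by
  rw [integral_integral_swap (integrable_prod_exp_affine_gaussianReal ha hb h)]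
  simp_rw [integral_exp_affine_gaussianReal]

end GaussianExp

lemma mul_integral_exp_mul_Ioc {t : ℝ} (ht : 0 ≤ t) (c : ℝ) :
    c * ∫ u in Ioc 0 t, rexp (c * u) = rexp (c * t) - 1 := by
  rw [← intervalIntegral.integral_of_le ht, intervalIntegral.mul_integral_comp_mul_left,
    integral_exp]
  simp

lemma integrable_exp_mul_exp_mul_Ioc_prod (t c : ℝ) :
    Integrable (fun p : ℝ × ℝ => rexp (c * p.1) * rexp (c * p.2))
      ((volume.restrict (Ioc 0 t)).prod (volume.restrict (Ioc 0 t))) := by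
  have h : IntegrableOn (fun u => rexp (c * u)) (Ioc 0 t) :=
    (by fun_prop : Continuous _).integrableOn_Ioc
  exact h.mul_prod h

section Jump

variable {lam alp t : ℝ}

noncomputable def jSlope (lam alp t z : ℝ) : ℝ :=
  rexp (alp * z * √t + (lam - alp ^ 2 / 2) * t)

noncomputable def jKernel (lam alp t z u : ℝ) : ℝ :=
  lam * rexp ((lam + alp * z / √t) * u - alp ^ 2 * u ^ 2 / (2 * t))

noncomputable def jIntercept (lam alp t z : ℝ) : ℝ :=
  ∫ u in (0:ℝ)..t, jKernel lam alp t z u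

lemma jfun_eq (φ z : ℝ) :
    jfun lam alp t φ z = jSlope lam alp t z * φ + jIntercept lam alp t z := rfl

lemma continuous_jSlope : Continuous (jSlope lam alp t) := by
  unfold jSlope; fun_prop

lemma continuous_jIntercept : Continuous (jIntercept lam alp t) :=
  intervalIntegral.continuous_parametric_intervalIntegral_of_continuous'
    (by unfold jKernel; fun_prop) _ _

lemma continuous_jfun : Continuous fun p : ℝ × ℝ => jfun lam alp t p.1 p.2 :=
  ((continuous_jSlope.comp continuous_snd).mul continuous_fst).add
    (continuous_jIntercept.comp continuous_snd)

lemma jIntercept_eq_setIntegral (ht : 0 ≤ t) (z : ℝ) :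
    jIntercept lam alp t z = ∫ u in Ioc 0 t, jKernel lam alp t z u :=
  intervalIntegral.integral_of_le ht

lemma jSlope_sq (z : ℝ) :
    jSlope lam alp t z ^ 2 = rexp ((2 * lam - alp ^ 2) * t + 2 * alp * √t * z) := by
  rw [jSlope, sq, ← exp_add]
  ring_nf

lemma jSlope_mul_jIntercept (ht : 0 ≤ t) (z : ℝ) :
    jSlope lam alp t z * jIntercept lam alp t z = lam * ∫ u in Ioc 0 t,
      rexp ((lam - alp ^ 2 / 2) * t + lam * u - alp ^ 2 * u ^ 2 / (2 * t) +
        (alp * √t + alp * u / √t) * z) := by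
  rw [jIntercept_eq_setIntegral ht, ← integral_const_mul, ← integral_const_mul]
  congr 1 with u
  rw [jSlope, jKernel, mul_left_comm, ← exp_add]
  ring_nf

lemma jIntercept_sq (ht : 0 ≤ t) (z : ℝ) :
    jIntercept lam alp t z ^ 2 = lam ^ 2 * ∫ p, rexp (lam * (p.1 + p.2) -
      alp ^ 2 * (p.1 ^ 2 + p.2 ^ 2) / (2 * t) + alp * (p.1 + p.2) / √t * z)
        ∂((volume.restrict (Ioc 0 t)).prod (volume.restrict (Ioc 0 t))) := by
  rw [jIntercept_eq_setIntegral ht, sq, ← integral_prod_mul, ← integral_const_mul]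
  congr 1 with p
  rw [jKernel, jKernel, mul_mul_mul_comm, ← exp_add]
  ring_nf

end Jump

section GaussianMoments

variable {lam alp t : ℝ}

lemma integrable_jSlope_sq : Integrable (fun z => jSlope lam alp t z ^ 2) (gaussianReal 0 1) := by
  simp_rw [jSlope_sq]
  exact integrable_exp_affine_gaussianReal _ _

lemma integral_jSlope_sq (ht : 0 ≤ t) :
    ∫ z, jSlope lam alp t z ^ 2 ∂gaussianReal 0 1 = rexp ((2 * lam + alp ^ 2) * t) := by
  simp_rw [jSlope_sq]
  rw [integral_exp_affine_gaussianReal, mul_pow, mul_pow, sq_sqrt ht]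
  ring_nf

lemma jSlope_jKernel_exponent (ht : 0 < t) (u : ℝ) :
    (lam - alp ^ 2 / 2) * t + lam * u - alp ^ 2 * u ^ 2 / (2 * t) +
      (alp * √t + alp * u / √t) ^ 2 / 2 = lam * t + (lam + alp ^ 2) * u := by
  obtain ⟨s, hs, rfl⟩ : ∃ s, 0 < s ∧ t = s ^ 2 := ⟨√t, sqrt_pos.2 ht, (sq_sqrt ht.le).symm⟩
  rw [sqrt_sq hs.le]
  field_simp
  ring

lemma integrable_exp_jSlope_jKernel_exponent (ht : 0 < t) :
    Integrable (fun u => rexp ((lam - alp ^ 2 / 2) * t + lam * u - alp ^ 2 * u ^ 2 / (2 * t) +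
      (alp * √t + alp * u / √t) ^ 2 / 2)) (volume.restrict (Ioc 0 t)) := by
  simp_rw [jSlope_jKernel_exponent ht]
  exact (by fun_prop : Continuous _).integrableOn_Ioc

lemma integrable_jSlope_mul_jIntercept (ht : 0 < t) :
    Integrable (fun z => jSlope lam alp t z * jIntercept lam alp t z) (gaussianReal 0 1) := by
  simp_rw [jSlope_mul_jIntercept ht.le]
  exact ((integrable_prod_exp_affine_gaussianReal (by fun_prop) (by fun_prop)
    (integrable_exp_jSlope_jKernel_exponent ht)).integral_prod_left).const_mul lam

lemma integral_jSlope_mul_jIntercept (ht : 0 < t) (hla : lam + alp ^ 2 ≠ 0) :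
    ∫ z, jSlope lam alp t z * jIntercept lam alp t z ∂gaussianReal 0 1 =
      rexp (lam * t) * (lam / (lam + alp ^ 2)) * (rexp ((lam + alp ^ 2) * t) - 1) := by
  simp_rw [jSlope_mul_jIntercept ht.le]
  rw [integral_const_mul, integral_integral_exp_affine_gaussianReal (by fun_prop) (by fun_prop)
    (integrable_exp_jSlope_jKernel_exponent ht)]
  simp_rw [jSlope_jKernel_exponent ht, exp_add, integral_const_mul]
  rw [← mul_integral_exp_mul_Ioc ht.le]
  field_simp

lemma jKernel_mul_jKernel_exponent (ht : 0 < t) (u v : ℝ) :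
    lam * (u + v) - alp ^ 2 * (u ^ 2 + v ^ 2) / (2 * t) + (alp * (u + v) / √t) ^ 2 / 2 =
      lam * (u + v) + alp ^ 2 * (u * v) / t := by
  rw [div_pow, sq_sqrt ht.le]
  field_simp
  ring

lemma ae_exp_jKernel_mul_jKernel_exponent_le (ht : 0 < t) :
    ∀ᵐ p : ℝ × ℝ ∂(volume.restrict (Ioc 0 t)).prod (volume.restrict (Ioc 0 t)),
      rexp (lam * (p.1 + p.2) + alp ^ 2 * (p.1 * p.2) / t) ≤
        rexp (alp ^ 2 * t) * (rexp (lam * p.1) * rexp (lam * p.2)) := by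
  rw [Measure.prod_restrict]
  filter_upwards [ae_restrict_mem (measurableSet_Ioc.prod measurableSet_Ioc)] with p ⟨hu, hv⟩
  rw [← exp_add, ← exp_add, exp_le_exp]
  have huv : p.1 * p.2 ≤ t * t := mul_le_mul hu.2 hv.2 hv.1.le ht.le
  have : alp ^ 2 * (p.1 * p.2) / t ≤ alp ^ 2 * t := by
    rw [div_le_iff₀ ht]
    nlinarith [sq_nonneg alp]
  linarith

lemma integrable_exp_jKernel_mul_jKernel_exponent (ht : 0 < t) :
    Integrable (fun p : ℝ × ℝ => rexp (lam * (p.1 + p.2) -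
      alp ^ 2 * (p.1 ^ 2 + p.2 ^ 2) / (2 * t) + (alp * (p.1 + p.2) / √t) ^ 2 / 2))
      ((volume.restrict (Ioc 0 t)).prod (volume.restrict (Ioc 0 t))) := by
  simp_rw [jKernel_mul_jKernel_exponent ht]
  refine ((integrable_exp_mul_exp_mul_Ioc_prod t lam).const_mul (rexp (alp ^ 2 * t))).mono'
    (by fun_prop) ?_
  filter_upwards [ae_exp_jKernel_mul_jKernel_exponent_le ht] with p hp
  rwa [norm_of_nonneg (exp_pos _).le]

lemma integrable_jIntercept_sq (ht : 0 < t) :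
    Integrable (fun z => jIntercept lam alp t z ^ 2) (gaussianReal 0 1) := by
  simp_rw [jIntercept_sq ht.le]
  exact ((integrable_prod_exp_affine_gaussianReal (by fun_prop) (by fun_prop)
    (integrable_exp_jKernel_mul_jKernel_exponent ht)).integral_prod_left).const_mul _

lemma integral_jIntercept_sq_le (ht : 0 < t) :
    ∫ z, jIntercept lam alp t z ^ 2 ∂gaussianReal 0 1 ≤
      rexp (alp ^ 2 * t) * (rexp (lam * t) - 1) ^ 2 := by
  simp_rw [jIntercept_sq ht.le]
  rw [integral_const_mul, integral_integral_exp_affine_gaussianReal (by fun_prop) (by fun_prop)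
    (integrable_exp_jKernel_mul_jKernel_exponent ht)]
  simp_rw [jKernel_mul_jKernel_exponent ht]
  calc lam ^ 2 * ∫ p, rexp (lam * (p.1 + p.2) + alp ^ 2 * (p.1 * p.2) / t)
        ∂(volume.restrict (Ioc 0 t)).prod (volume.restrict (Ioc 0 t))
      ≤ lam ^ 2 * ∫ p, rexp (alp ^ 2 * t) * (rexp (lam * p.1) * rexp (lam * p.2))
        ∂(volume.restrict (Ioc 0 t)).prod (volume.restrict (Ioc 0 t)) := by
        refine mul_le_mul_of_nonneg_left (integral_mono_of_nonneg
          (ae_of_all _ fun p => (exp_pos _).le)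
          ((integrable_exp_mul_exp_mul_Ioc_prod t lam).const_mul (rexp (alp ^ 2 * t)))
          (ae_exp_jKernel_mul_jKernel_exponent_le ht)) (sq_nonneg lam)
    _ = rexp (alp ^ 2 * t) * (lam * ∫ u in Ioc 0 t, rexp (lam * u)) ^ 2 := by
        rw [integral_const_mul,
          integral_prod_mul (fun u => rexp (lam * u)) fun u => rexp (lam * u)]
        ring
    _ = rexp (alp ^ 2 * t) * (rexp (lam * t) - 1) ^ 2 := by
        rw [mul_integral_exp_mul_Ioc ht.le]

end GaussianMoments

section AffineSquare

variable {Ω β : Type*} {m m₀ : MeasurableSpace Ω} [MeasurableSpace β] {μ : Measure[m₀] Ω}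
  {ν : Measure β} {X : Ω → ℝ} {Y : Ω → β} {a b : β → ℝ}

lemma ProbabilityTheory.IndepFun.integrable_comp_mul_comp (hXY : IndepFun X Y μ)
    (hY : Measurable Y) (hlaw : μ.map Y = ν) {f : ℝ → ℝ} {g : β → ℝ} (hf : Measurable f)
    (hg : Measurable g) (hfX : Integrable (fun ω => f (X ω)) μ) (hgν : Integrable g ν) :
    Integrable (fun ω => f (X ω) * g (Y ω)) μ :=
  (hXY.comp hf hg).integrable_mul hfX ((hlaw ▸ hgν).comp_measurable hY)

lemma indepFun_of_indep_comap (hX : Measurable[m] X)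
    (hind : Indep (MeasurableSpace.comap Y ‹_›) m μ) : IndepFun X Y μ := by
  rw [IndepFun_iff_Indep]
  exact indep_of_indep_of_le_left hind.symm hX.comap_le

omit [MeasurableSpace β] in
lemma sq_affine_comp_eq : (fun ω => (a (Y ω) * X ω + b (Y ω)) ^ 2) =
    (fun ω => X ω ^ 2) * (fun ω => a (Y ω) ^ 2) +
      (fun ω => 2 * X ω) * (fun ω => a (Y ω) * b (Y ω)) + fun ω => b (Y ω) ^ 2 := by
  ext ω
  simp only [Pi.add_apply, Pi.mul_apply]
  ring

lemma integrable_sq_affine_of_indepFun [IsFiniteMeasure μ] (hX : AEStronglyMeasurable X μ)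
    (hY : Measurable Y) (hXY : IndepFun X Y μ) (hlaw : μ.map Y = ν) (ha : Measurable a)
    (hb : Measurable b) (hX2 : Integrable (fun ω => X ω ^ 2) μ)
    (ha2 : Integrable (fun y => a y ^ 2) ν)
    (hab : Integrable (fun y => a y * b y) ν) (hb2 : Integrable (fun y => b y ^ 2) ν) :
    Integrable (fun ω => (a (Y ω) * X ω + b (Y ω)) ^ 2) μ := by
  have hX1 : Integrable X μ := ((memLp_two_iff_integrable_sq hX).2 hX2).integrable one_le_two
  rw [sq_affine_comp_eq]
  exact ((hXY.integrable_comp_mul_comp hY hlaw (measurable_id.pow_const 2) (ha.pow_const 2)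
    hX2 ha2).add (hXY.integrable_comp_mul_comp hY hlaw (measurable_const_mul 2) (ha.mul hb)
      (hX1.const_mul 2) hab)).add ((hlaw ▸ hb2).comp_measurable hY)

lemma condExp_sq_affine_of_indep [IsFiniteMeasure μ] (hm : m ≤ m₀)
    (hX : StronglyMeasurable[m] X) (hY : Measurable Y)
    (hind : Indep (MeasurableSpace.comap Y ‹_›) m μ) (hlaw : μ.map Y = ν)
    (ha : Measurable a) (hb : Measurable b) (hX2 : Integrable (fun ω => X ω ^ 2) μ)
    (ha2 : Integrable (fun y => a y ^ 2) ν) (hab : Integrable (fun y => a y * b y) ν)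
    (hb2 : Integrable (fun y => b y ^ 2) ν) :
    μ[fun ω => (a (Y ω) * X ω + b (Y ω)) ^ 2 | m] =ᵐ[μ] fun ω =>
      X ω ^ 2 * ∫ y, a y ^ 2 ∂ν + 2 * X ω * ∫ y, a y * b y ∂ν + ∫ y, b y ^ 2 ∂ν := by
  have hXY : IndepFun X Y μ := indepFun_of_indep_comap hX.measurable hind
  have hX1 : Integrable X μ :=
    ((memLp_two_iff_integrable_sq (hX.mono hm).aestronglyMeasurable).2 hX2).integrable one_le_two
  have h1 : Integrable ((fun ω => X ω ^ 2) * fun ω => a (Y ω) ^ 2) μ :=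
    hXY.integrable_comp_mul_comp hY hlaw (measurable_id.pow_const 2) (ha.pow_const 2) hX2 ha2
  have h2 : Integrable ((fun ω => 2 * X ω) * fun ω => a (Y ω) * b (Y ω)) μ :=
    hXY.integrable_comp_mul_comp hY hlaw (measurable_const_mul 2) (ha.mul hb)
      (hX1.const_mul 2) hab
  have hcomp {g : β → ℝ} (hg : Integrable g ν) : Integrable (fun ω => g (Y ω)) μ :=
    (hlaw ▸ hg).comp_measurable hY
  have hE {g : β → ℝ} (hg : Measurable g) :
      μ[fun ω => g (Y ω) | m] =ᵐ[μ] fun _ => ∫ y, g y ∂ν := by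
    rw [← hlaw, integral_map hY.aemeasurable hg.aestronglyMeasurable]
    exact condExp_indep_eq hY.comap_le hm (hg.comp (comap_measurable Y)).stronglyMeasurable hind
  rw [sq_affine_comp_eq]
  filter_upwards [condExp_add (h1.add h2) (hcomp hb2) m, condExp_add h1 h2 m,
    condExp_mul_of_stronglyMeasurable_left (f := fun ω => X ω ^ 2) (hX.pow 2) h1 (hcomp ha2),
    condExp_mul_of_stronglyMeasurable_left (f := fun ω => 2 * X ω) (hX.const_mul 2) h2 (hcomp hab),
    hE (ha.pow_const 2), hE (g := fun y => a y * b y) (ha.mul hb), hE (hb.pow_const 2)]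
    with ω hadd₁ hadd₂ hpull₁ hpull₂ hE₁ hE₂ hE₃
  rw [hadd₁, Pi.add_apply, hadd₂, Pi.add_apply, hpull₁, hpull₂, Pi.mul_apply, Pi.mul_apply,
    hE₁, hE₂, hE₃]

end AffineSquare

section OddsChain

variable {Ω : Type*} {Z : ℕ → Ω → ℝ} {lam alp t φ : ℝ}

lemma measurable_obsFiltration {i n : ℕ} (hi : i ∈ Icc 1 n) :
    Measurable[obsFiltration Z n] (Z i) :=
  Measurable.of_comap_le
    (le_iSup₂ (f := fun i (_ : i ∈ Icc 1 n) => MeasurableSpace.comap (Z i) _) i hi)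

lemma measurable_oddsChain_obsFiltration {j n : ℕ} (hj : j ≤ n) :
    Measurable[obsFiltration Z n] (oddsChain lam alp t φ Z j) := by
  induction j with
  | zero => exact measurable_const
  | succ j ih =>
    exact continuous_jfun.measurable.comp
      ((ih (by omega)).prodMk (measurable_obsFiltration ⟨by omega, hj⟩))

variable [MeasurableSpace Ω] {μ : Measure Ω}

lemma obsFiltration_le (hZ : ∀ k, Measurable (Z k)) (n : ℕ) :
    obsFiltration Z n ≤ ‹MeasurableSpace Ω› :=
  iSup₂_le fun i _ => (hZ i).comap_le

lemma indep_comap_obsFiltration (hZ : ∀ k, Measurable (Z k)) (hindep : iIndepFun Z μ) (n : ℕ) :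
    Indep (MeasurableSpace.comap (Z (n + 1)) inferInstance) (obsFiltration Z n) μ := by
  have hdisj : Disjoint ({n + 1} : Set ℕ) (Icc 1 n) := by
    simp only [disjoint_singleton_left, mem_Icc]
    omega
  have h := indep_iSup_of_disjoint (fun i => (hZ i).comap_le) hindep.iIndep hdisj
  rwa [iSup_singleton] at h

lemma integrable_oddsChain_sq [IsProbabilityMeasure μ] (ht : 0 < t) (hZ : ∀ k, Measurable (Z k))
    (hZdist : ∀ k, 1 ≤ k → μ.map (Z k) = gaussianReal 0 1) (hindep : iIndepFun Z μ) (n : ℕ) :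
    Integrable (fun ω => oddsChain lam alp t φ Z n ω ^ 2) μ := by
  induction n with
  | zero => exact integrable_const (φ ^ 2)
  | succ n ih =>
    have hX : Measurable[obsFiltration Z n] (oddsChain lam alp t φ Z n) :=
      measurable_oddsChain_obsFiltration le_rfl
    exact integrable_sq_affine_of_indepFun (a := jSlope lam alp t) (b := jIntercept lam alp t)
      (hX.mono (obsFiltration_le hZ n) le_rfl).aestronglyMeasurable (hZ _)
      (indepFun_of_indep_comap hX (indep_comap_obsFiltration hZ hindep n)) (hZdist _ (by omega))
      continuous_jSlope.measurable continuous_jIntercept.measurable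
      ih integrable_jSlope_sq (integrable_jSlope_mul_jIntercept ht) (integrable_jIntercept_sq ht)

lemma condExp_oddsChain_succ_sq [IsProbabilityMeasure μ] (ht : 0 < t) (hZ : ∀ k, Measurable (Z k))
    (hZdist : ∀ k, 1 ≤ k → μ.map (Z k) = gaussianReal 0 1) (hindep : iIndepFun Z μ) (n : ℕ) :
    μ[fun ω => oddsChain lam alp t φ Z (n + 1) ω ^ 2 | obsFiltration Z n] =ᵐ[μ] fun ω =>
      oddsChain lam alp t φ Z n ω ^ 2 * ∫ z, jSlope lam alp t z ^ 2 ∂gaussianReal 0 1 +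
        2 * oddsChain lam alp t φ Z n ω *
          ∫ z, jSlope lam alp t z * jIntercept lam alp t z ∂gaussianReal 0 1 +
        ∫ z, jIntercept lam alp t z ^ 2 ∂gaussianReal 0 1 :=
  condExp_sq_affine_of_indep (X := oddsChain lam alp t φ Z n) (a := jSlope lam alp t)
    (b := jIntercept lam alp t) (obsFiltration_le hZ n)
    (measurable_oddsChain_obsFiltration le_rfl).stronglyMeasurable (hZ _)
    (indep_comap_obsFiltration hZ hindep n) (hZdist _ (by omega)) continuous_jSlope.measurable
    continuous_jIntercept.measurable (integrable_oddsChain_sq ht hZ hZdist hindep n)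
    integrable_jSlope_sq (integrable_jSlope_mul_jIntercept ht) (integrable_jIntercept_sq ht)

end OddsChain

theorem oddsChain_condexp_sq_le_general (lam alp t : ℝ) (hlam : 0 < lam) (ht : 0 < t)
    {Ω : Type*} [MeasurableSpace Ω] (μ : MeasureTheory.Measure Ω) [IsProbabilityMeasure μ]
    (Z : ℕ → Ω → ℝ) (hZmeas : ∀ k, Measurable (Z k))
    (hZdist : ∀ k, 1 ≤ k → μ.map (Z k) = ProbabilityTheory.gaussianReal 0 1)
    (hZindep : ProbabilityTheory.iIndepFun Z μ)
    (φ : ℝ) :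
    ∀ k : ℕ, 1 ≤ k →
      Integrable (fun ω => (oddsChain lam alp t φ Z k ω) ^ 2) μ ∧
        ∀ᵐ ω ∂μ,
          (μ[fun ω' => (oddsChain lam alp t φ Z k ω') ^ 2 | obsFiltration Z (k - 1)]) ω ≤
            (oddsChain lam alp t φ Z (k - 1) ω) ^ 2 * Real.exp ((2 * lam + alp ^ 2) * t) +
              2 * oddsChain lam alp t φ Z (k - 1) ω * Real.exp (lam * t) *
                (lam / (lam + alp ^ 2)) * (Real.exp ((lam + alp ^ 2) * t) - 1) +
              Real.exp (alp ^ 2 * t) * (Real.exp (lam * t) - 1) ^ 2 := by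
  intro k hk
  obtain ⟨n, rfl⟩ := Nat.exists_eq_add_of_le' hk
  refine ⟨integrable_oddsChain_sq ht hZmeas hZdist hZindep (n + 1), ?_⟩
  filter_upwards [condExp_oddsChain_succ_sq ht hZmeas hZdist hZindep n] with ω hω
  rw [Nat.add_sub_cancel, hω, integral_jSlope_sq ht.le,
    integral_jSlope_mul_jIntercept ht (by positivity)]
  linarith [integral_jIntercept_sq_le (lam := lam) (alp := alp) ht]

/-- Conditional second-moment bound for the odds chain: for `k ≥ 1`, `Φₖ` is
square-integrable and a.s.
`E[Φₖ² | Fₖ₋₁] ≤ Φₖ₋₁² e^{(2λ+α²)t} + 2Φₖ₋₁ e^{λt}(λ/(λ+α²))(e^{(λ+α²)t} − 1)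
  + e^{α²t}(e^{λt} − 1)²`. -/
theorem oddsChain_condexp_sq_le (lam alp t : ℝ) (hlam : 0 < lam) (halp : 0 < alp) (ht : 0 < t)
    {Ω : Type*} [MeasurableSpace Ω] (μ : MeasureTheory.Measure Ω) [IsProbabilityMeasure μ]
    (Z : ℕ → Ω → ℝ) (hZmeas : ∀ k, Measurable (Z k))
    (hZdist : ∀ k, 1 ≤ k → μ.map (Z k) = ProbabilityTheory.gaussianReal 0 1)
    (hZindep : ProbabilityTheory.iIndepFun Z μ)
    (φ : ℝ) (hφ : 0 ≤ φ) :
    ∀ k : ℕ, 1 ≤ k →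
      Integrable (fun ω => (oddsChain lam alp t φ Z k ω) ^ 2) μ ∧
        ∀ᵐ ω ∂μ,
          (μ[fun ω' => (oddsChain lam alp t φ Z k ω') ^ 2 | obsFiltration Z (k - 1)]) ω ≤
            (oddsChain lam alp t φ Z (k - 1) ω) ^ 2 * Real.exp ((2 * lam + alp ^ 2) * t) +
              2 * oddsChain lam alp t φ Z (k - 1) ω * Real.exp (lam * t) *
                (lam / (lam + alp ^ 2)) * (Real.exp ((lam + alp ^ 2) * t) - 1) +
              Real.exp (alp ^ 2 * t) * (Real.exp (lam * t) - 1) ^ 2 :=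
  oddsChain_condexp_sq_le_general lam alp t hlam ht μ Z hZmeas hZdist hZindep φ
end
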